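/- Entropy of softmax under score gap: let s_1, …, s_n be scores with s_1 − s_j ≥ δ > 0 for all j ≥ 2, and let α = softmax(s/T) with T > 0. Then the Shannon entropy of α satisfies H(α) ≤ H(C/(C+n−1)) + (1 − C/(C+n−1))·log(n−1), where C = exp(δ/T) and H(p) is the binary entropy; equivalently H(α) ≤ log(C + n − 1) − (C/(C+n−1)) log C. -/

import Mathlib

/-!
Let `β` put mass `C / (C + n - 1)` on the top score and `1 / (C + n - 1)` on every other
outcome. Gibbs' inequality bounds `H(α)` by the cross entropy `-∑ αᵢ log βᵢ`, which equals
`log (C + n - 1) - α₁ log C`. The gap gives `αⱼ C ≤ α₁` for `j ≠ 1`, hence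
`α₁ ≥ C / (C + n - 1)`, and `log C ≥ 0` turns this into the claimed bound.
-/

open Finset Real

lemma mul_log_le_mul_log_add_sub {p q : ℝ} (hp : 0 ≤ p) (hq : 0 < q) :
    p * log q ≤ p * log p + (q - p) := by
  rcases hp.eq_or_lt with rfl | hp
  · simpa using hq.le
  · have h := mul_le_mul_of_nonneg_left (log_le_sub_one_of_pos (div_pos hq hp)) hp.le
    rw [log_div hq.ne' hp.ne', mul_sub, mul_sub, mul_div_cancel₀ _ hp.ne', mul_one] at h
    linarith

theorem sum_mul_log_le_sum_mul_log {ι : Type*} {s : Finset ι} {p q : ι → ℝ}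
    (hp : ∀ i ∈ s, 0 ≤ p i) (hq : ∀ i ∈ s, 0 < q i) (hsum : ∑ i ∈ s, q i ≤ ∑ i ∈ s, p i) :
    ∑ i ∈ s, p i * log (q i) ≤ ∑ i ∈ s, p i * log (p i) :=
  calc ∑ i ∈ s, p i * log (q i)
      ≤ ∑ i ∈ s, (p i * log (p i) + (q i - p i)) :=
        sum_le_sum fun i hi => mul_log_le_mul_log_add_sub (hp i hi) (hq i hi)
    _ = ∑ i ∈ s, p i * log (p i) + (∑ i ∈ s, q i - ∑ i ∈ s, p i) := by
        rw [sum_add_distrib, sum_sub_distrib]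
    _ ≤ ∑ i ∈ s, p i * log (p i) := by linarith

section Softmax

variable {ι : Type*} [Fintype ι]

noncomputable def softmax (x : ι → ℝ) (i : ι) : ℝ := exp (x i) / ∑ j, exp (x j)

lemma softmax_mul_exp_le {x : ι → ℝ} {i j : ι} {d : ℝ} (h : x j + d ≤ x i) :
    softmax x j * exp d ≤ softmax x i := by
  rw [softmax, softmax, div_mul_eq_mul_div, ← exp_add]
  gcongr

variable [Nonempty ι]

lemma softmax_pos (x : ι → ℝ) (i : ι) : 0 < softmax x i :=
  div_pos (exp_pos _) (sum_pos (fun _ _ => exp_pos _) univ_nonempty)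

lemma sum_softmax (x : ι → ℝ) : ∑ i, softmax x i = 1 := by
  simp only [softmax]
  rw [← sum_div, div_self (sum_pos (fun _ _ => exp_pos _) univ_nonempty).ne']

end Softmax

section PeakedDistribution

variable {ι : Type*} [Fintype ι] {C : ℝ}

lemma add_card_sub_one_pos (i₀ : ι) (hC : 0 < C) : 0 < C + Fintype.card ι - 1 := by
  have : (1 : ℝ) ≤ Fintype.card ι := by exact_mod_cast Fintype.card_pos_iff.mpr ⟨i₀⟩
  linarith

variable [DecidableEq ι]

/-- The entropy maximizer among distributions with top mass `C / (C + card ι - 1)` at `i₀`. -/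
noncomputable def peakedDist (i₀ : ι) (C : ℝ) (i : ι) : ℝ :=
  (if i = i₀ then C else 1) / (C + Fintype.card ι - 1)

variable {i₀ : ι}

lemma div_add_card_sub_one_le {p : ι → ℝ} (hC : 0 < C) (hsum : ∑ i, p i = 1)
    (hdom : ∀ j ≠ i₀, p j * C ≤ p i₀) : C / (C + Fintype.card ι - 1) ≤ p i₀ := by
  have hrest : ∑ j ∈ univ.erase i₀, p j * C ≤ (Fintype.card ι - 1) * p i₀ := by
    calc ∑ j ∈ univ.erase i₀, p j * C ≤ ∑ j ∈ univ.erase i₀, p i₀ :=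
          sum_le_sum fun j hj => hdom j (ne_of_mem_erase hj)
      _ = (Fintype.card ι - 1) * p i₀ := by
          rw [sum_const, nsmul_eq_mul, cast_card_erase_of_mem (mem_univ _), card_univ]
  have hmass : p i₀ * C + ∑ j ∈ univ.erase i₀, p j * C = C := by
    rw [add_sum_erase univ (fun j => p j * C) (mem_univ i₀), ← sum_mul, hsum, one_mul]
  rw [div_le_iff₀ (add_card_sub_one_pos i₀ hC)]
  linarith

lemma peakedDist_pos (hC : 0 < C) (i : ι) : 0 < peakedDist i₀ C i := by
  have := add_card_sub_one_pos i₀ hC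
  unfold peakedDist
  split_ifs <;> positivity

lemma sum_peakedDist (hC : 0 < C) : ∑ i, peakedDist i₀ C i = 1 := by
  simp only [peakedDist]
  rw [← sum_div, div_eq_one_iff_eq (add_card_sub_one_pos i₀ hC).ne']
  rw [sum_ite, filter_eq', filter_ne', if_pos (mem_univ _), sum_singleton, sum_const,
    nsmul_one, cast_card_erase_of_mem (mem_univ _), card_univ]
  ring

lemma neg_sum_mul_log_peakedDist (hC : 0 < C) {p : ι → ℝ} (hsum : ∑ i, p i = 1) :
    -∑ i, p i * log (peakedDist i₀ C i) = log (C + Fintype.card ι - 1) - p i₀ * log C := by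
  have hD := (add_card_sub_one_pos i₀ hC).ne'
  have hw : ∀ i, (if i = i₀ then C else 1) ≠ 0 := fun i => by split_ifs <;> positivity
  simp only [peakedDist, log_div (hw _) hD, apply_ite log, log_one, mul_sub, mul_ite, mul_zero,
    sum_sub_distrib, Fintype.sum_ite_eq', ← sum_mul, hsum]
  ring

end PeakedDistribution

/-- If `s_1 - s_j ≥ δ > 0` for all `j ≥ 2` and
`α = softmax(s/T)` with `T > 0`, then with `C = exp(δ/T)` the Shannon entropy
of `α` satisfies `H(α) ≤ log(C + n - 1) - (C/(C+n-1)) log C`. -/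
theorem softmax_entropy_bound (n : ℕ) (hn : 2 ≤ n) (s : Fin n → ℝ)
    (δ T : ℝ) (hδ : 0 < δ) (hT : 0 < T)
    (hgap : ∀ j : Fin n, j ≠ ⟨0, by omega⟩ → δ ≤ s ⟨0, by omega⟩ - s j)
    (α : Fin n → ℝ)
    (hα : ∀ i, α i = Real.exp (s i / T) / ∑ j, Real.exp (s j / T)) :
    -∑ i, α i * Real.log (α i)
      ≤ Real.log (Real.exp (δ / T) + (n : ℝ) - 1)
        - (Real.exp (δ / T) / (Real.exp (δ / T) + (n : ℝ) - 1))
          * Real.log (Real.exp (δ / T)) := by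
  obtain rfl : α = softmax (s · / T) := funext hα
  set i₀ : Fin n := ⟨0, by omega⟩
  have : Nonempty (Fin n) := ⟨i₀⟩
  set C := exp (δ / T)
  have hC : 0 < C := exp_pos _
  have hlogC : 0 ≤ log C := by rw [log_exp]; positivity
  have hdom : ∀ j ≠ i₀, softmax (s · / T) j * C ≤ softmax (s · / T) i₀ := fun j hj =>
    softmax_mul_exp_le <| by
      rw [← add_div, div_le_div_iff_of_pos_right hT]
      linarith [hgap j hj]
  have htop := div_add_card_sub_one_le hC (sum_softmax _) hdom
  rw [Fintype.card_fin] at htop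
  calc -∑ i, softmax (s · / T) i * log (softmax (s · / T) i)
      ≤ -∑ i, softmax (s · / T) i * log (peakedDist i₀ C i) :=
        neg_le_neg <| sum_mul_log_le_sum_mul_log (fun i _ => (softmax_pos _ i).le)
          (fun i _ => peakedDist_pos hC i) (by rw [sum_peakedDist hC, sum_softmax])
    _ = log (C + n - 1) - softmax (s · / T) i₀ * log C := by
        rw [neg_sum_mul_log_peakedDist hC (sum_softmax _), Fintype.card_fin]
    _ ≤ log (C + n - 1) - C / (C + n - 1) * log C := by gcongr
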